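/- Let $\epsilon \geq 0$, $\ell \geq 1$, and $a_1,\dots,a_\ell \geq 1$ with $k = \prod_{i=1}^\ell a_i$. If a total weight $W > 0$ is recursively partitioned along the hierarchy, where at each level $i$ (from $\ell$ down to $1$) each block of weight $W'$ at depth $d$ (with $k' = a_1 \cdots a_d$ remaining sub-blocks) is split into $a_d$ parts each of weight at most $(1+\epsilon') W'/a_d$ with $\epsilon' = ((1+\epsilon)\frac{k' W}{k W'})^{1/d} - 1$, then every final block has weight at most $(1+\epsilon)W/k$. -/

import Mathlib

/-!
Let `B d = (1 + ε) (a₀ ⋯ a_{d-1}) W / k` be the weight budget of a block at depth `d`; at the top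
`B ℓ = (1 + ε) W ≥ W`, and at the leaves `B 0` is the target `(1 + ε) W / k`. Going down one level,
the adaptive imbalance is `ε' = r ^ (1/d) - 1` with `r = B d / Wt d`. If the current block is within
budget then `r ≥ 1`, hence `r ^ (1/d) ≤ r`, and every part weighs at most
`r · Wt d / a = B d / a = B (d - 1)`: the invariant `Wt d ≤ B d` propagates down to the leaves.
-/

open Finset

theorem le_div_of_le_adaptive_imbalance {B w w' c t : ℝ} (hw : 0 < w) (hwB : w ≤ B) (hc : 0 < c)
    (ht : t ≤ 1) (h : w' ≤ (1 + ((B / w) ^ t - 1)) * w / c) : w' ≤ B / c := by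
  have hr : 1 ≤ B / w := (one_le_div hw).2 hwB
  calc w' ≤ (B / w) ^ t * w / c := by simpa using h
    _ ≤ B / w * w / c := by gcongr; exact Real.rpow_le_self_of_one_le hr ht
    _ = B / c := by rw [div_mul_cancel₀ _ hw.ne']

theorem adaptive_imbalance_balanced_general
    (ℓ : ℕ) (a : ℕ → ℕ) (ha : ∀ i, 1 ≤ a i)
    (ε W : ℝ) (hε : 0 ≤ ε) (hW : 0 < W)
    (k : ℕ) (hk : k = ∏ i ∈ Finset.range ℓ, a i)
    (Wt : ℕ → ℝ) (hWtop : Wt ℓ = W) (hWpos : ∀ d, 0 < Wt d)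
    (hstep : ∀ d, 1 ≤ d → d ≤ ℓ →
      Wt (d - 1) ≤
        (1 + ((((1 + ε) * ((∏ i ∈ Finset.range d, a i : ℕ) * W) / (k * Wt d)) ^
          ((1 : ℝ) / d)) - 1)) * Wt d / a (d - 1)) :
    Wt 0 ≤ (1 + ε) * W / k := by
  have hk0 : (0 : ℝ) < k := by rw [hk]; exact_mod_cast prod_pos fun i _ => ha i
  have ha0 : ∀ d, (0 : ℝ) < a d := fun d => by exact_mod_cast ha d
  set B : ℕ → ℝ := fun d => (1 + ε) * ((∏ i ∈ range d, a i : ℕ) * W) / k with hB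
  have hB_succ : ∀ d, B (d + 1) / a d = B d := fun d => by
    simp only [hB, prod_range_succ, Nat.cast_mul]
    field_simp [(ha0 d).ne']
  have hbudget : ∀ d ≤ ℓ, Wt d ≤ B d := by
    intro d hd
    induction hd using Nat.decreasingInduction with
    | self =>
      calc Wt ℓ = W := hWtop
        _ ≤ (1 + ε) * W := le_mul_of_one_le_left hW.le (by linarith)
        _ = B ℓ := by simp only [hB, ← hk]; field_simp
    | of_succ d hd ih =>
      rw [← hB_succ d]
      have h := hstep (d + 1) (Nat.le_add_left 1 d) hd
      rw [Nat.add_sub_cancel, div_mul_eq_div_div] at h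
      refine le_div_of_le_adaptive_imbalance (hWpos _) ih (ha0 d) ?_ h
      exact div_le_one_of_le₀ (by exact_mod_cast Nat.le_add_left 1 d) (Nat.cast_nonneg _)
  simpa [hB] using hbudget 0 (Nat.zero_le ℓ)

/-- Hierarchical multisection with adaptive imbalance: along any root-to-leaf
path of the hierarchy, if each block at depth `d` (weight `Wt d`) is split into
`a (d-1)` parts each of weight at most `(1+ε') * Wt d / a (d-1)` with the
adaptive imbalance `ε' = ((1+ε) * (k' * W) / (k * Wt d))^(1/d) - 1`
(`k' = a_1 ⋯ a_d`), then the final block has weight at most `(1+ε) * W / k`. -/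
theorem adaptive_imbalance_balanced
    (ℓ : ℕ) (hℓ : 1 ≤ ℓ) (a : ℕ → ℕ) (ha : ∀ i, 1 ≤ a i)
    (ε W : ℝ) (hε : 0 ≤ ε) (hW : 0 < W)
    (k : ℕ) (hk : k = ∏ i ∈ Finset.range ℓ, a i)
    (Wt : ℕ → ℝ) (hWtop : Wt ℓ = W) (hWpos : ∀ d, 0 < Wt d)
    (hstep : ∀ d, 1 ≤ d → d ≤ ℓ →
      Wt (d - 1) ≤
        (1 + ((((1 + ε) * ((∏ i ∈ Finset.range d, a i : ℕ) * W) / (k * Wt d)) ^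
          ((1 : ℝ) / d)) - 1)) * Wt d / a (d - 1)) :
    Wt 0 ≤ (1 + ε) * W / k :=
  adaptive_imbalance_balanced_general ℓ a ha ε W hε hW k hk Wt hWtop hWpos hstep
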